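/- (Scalar summation formula) For every positive even integer n with ab ≠ 1, (1 − ab)·∑_{k=0}^{n−1} j_k = j_n·(1 − b) + 2·j_{n−1}·(1 − a) + (a − 1), and for every positive odd integer n, (1 − ab)·∑_{k=0}^{n−1} j_k = j_n·(1 − a) + 2·j_{n−1}·(1 − b) + (a − 1). -/

import Mathlib

/-!
Adding one term at a time, the odd-length formula at `2m + 1` and the recursion
`j_{2m+2} = a j_{2m+1} + 2 j_{2m}` give the even-length formula at `2m + 2`; that one and
`j_{2m+3} = b j_{2m+2} + 2 j_{2m+1}` give the odd-length formula at `2m + 3`. Each step is a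
linear identity, so a single induction over pairs of terms suffices.
-/

noncomputable def jj (a b : ℝ) : ℕ → ℝ
  | 0 => 0
  | 1 => 1
  | n + 2 => (if Even (n + 2) then a else b) * jj a b (n + 1) + 2 * jj a b n

open Finset

section

variable (a b : ℝ)

lemma jj_two_mul_add_two (m : ℕ) :
    jj a b (2 * m + 2) = a * jj a b (2 * m + 1) + 2 * jj a b (2 * m) := by
  rw [jj, if_pos (by simp [parity_simps])]

lemma jj_two_mul_add_three (m : ℕ) :
    jj a b (2 * m + 3) = b * jj a b (2 * m + 2) + 2 * jj a b (2 * m + 1) := by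
  rw [show 2 * m + 3 = 2 * m + 1 + 2 by ring, jj, if_neg (by simp [parity_simps])]

lemma sum_range_jj_two_mul_add_one (m : ℕ) :
    (1 - a * b) * ∑ k ∈ range (2 * m + 1), jj a b k
      = jj a b (2 * m + 1) * (1 - a) + 2 * jj a b (2 * m) * (1 - b) + (a - 1) := by
  induction m with
  | zero => simp [jj]
  | succ m ih =>
    rw [show 2 * (m + 1) = 2 * m + 2 by ring, sum_range_succ, sum_range_succ, mul_add, mul_add,
      ih, jj_two_mul_add_three, jj_two_mul_add_two]
    ring

lemma sum_range_jj_two_mul_add_two (m : ℕ) :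
    (1 - a * b) * ∑ k ∈ range (2 * m + 2), jj a b k
      = jj a b (2 * m + 2) * (1 - b) + 2 * jj a b (2 * m + 1) * (1 - a) + (a - 1) := by
  rw [sum_range_succ, mul_add, sum_range_jj_two_mul_add_one,
    jj_two_mul_add_two]
  ring

end

theorem stmt11_general (a b : ℝ)
    (n : ℕ) (hn : 0 < n) :
    (Even n → (1 - a * b) * ∑ k ∈ Finset.range n, jj a b k
        = jj a b n * (1 - b) + 2 * jj a b (n - 1) * (1 - a) + (a - 1)) ∧
    (Odd n → (1 - a * b) * ∑ k ∈ Finset.range n, jj a b k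
        = jj a b n * (1 - a) + 2 * jj a b (n - 1) * (1 - b) + (a - 1)) := by
  obtain ⟨m, rfl | rfl⟩ := Nat.even_or_odd' n
  · obtain ⟨m, rfl⟩ := Nat.exists_eq_add_one_of_ne_zero (by omega : m ≠ 0)
    rw [show 2 * (m + 1) = 2 * m + 2 by ring, show 2 * m + 2 - 1 = 2 * m + 1 by omega]
    exact ⟨fun _ => sum_range_jj_two_mul_add_two a b m,
      fun h => absurd h (by simp [parity_simps])⟩
  · rw [Nat.add_sub_cancel]
    exact ⟨fun h => absurd h (by simp [parity_simps]),
      fun _ => sum_range_jj_two_mul_add_one a b m⟩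

theorem stmt11 (a b : ℝ) (ha : a ≠ 0) (hb : b ≠ 0) (hab : a * b ≠ 1)
    (n : ℕ) (hn : 0 < n) :
    (Even n → (1 - a * b) * ∑ k ∈ Finset.range n, jj a b k
        = jj a b n * (1 - b) + 2 * jj a b (n - 1) * (1 - a) + (a - 1)) ∧
    (Odd n → (1 - a * b) * ∑ k ∈ Finset.range n, jj a b k
        = jj a b n * (1 - a) + 2 * jj a b (n - 1) * (1 - b) + (a - 1)) :=
  stmt11_general a b n hn
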